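/- There exists a constant C > 0, depending only on d and γ, with the following property: for all real numbers N_1, N_2 ≥ 1, every k_0 ∈ ℝ^d with |k_0| ≥ 1, every a ∈ ℝ and every M > 0, the set {k_1 ∈ Z_γ^d : |k_1| ≤ 2N_1, |k_1 − k_0| ≤ 2N_2, and |a + 2 k_0·k_1| ≤ M} has at most C · (M/|k_0| + 1) · min(N_1,N_2)^{d−1} elements, where k_0·k_1 denotes the Euclidean inner product. (This lattice-point counting bound is the key step in the proof of the bilinear Strichartz estimate, Lemma 2.2 (i).) -/

import Mathlib

noncomputable section

/-- Embedding of the index lattice into `ℝ^d`: `m ↦ (m_j / γ_j)_j`,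
so that its range is `Z_γ^d`. -/
def latt {d : ℕ} (γ : Fin d → ℝ) (m : Fin d → ℤ) : EuclideanSpace ℝ (Fin d) :=
  WithLp.toLp 2 (fun j => (m j : ℝ) / γ j)

/-!
Choose a coordinate `j` at which `|k₀ j|` is maximal, so that `|k₀ j| ≥ ‖k₀‖ / √d`. Each of the
two ball conditions confines every coordinate `m i` to an interval of length `O(γ i · N)`, where
`N = min N₁ N₂` (centred at `0` or at `γ i · k₀ i`, whichever ball is smaller). Once the
coordinates other than `j` are fixed, `a + 2 ⟪k₀, latt γ m⟫` is affine in `m j` with slope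
`2 k₀ j / γ j`, so the slab condition leaves `O(M / ‖k₀‖ + 1)` choices for `m j`. Multiplying,
the count is `O((M / ‖k₀‖ + 1) · N ^ (d - 1))`.
-/

open Finset Function

lemma Int.mem_Icc_ceil_floor_of_abs_sub_le {n : ℤ} {c t : ℝ} (h : |(n : ℝ) - c| ≤ t) :
    n ∈ Icc ⌈c - t⌉ ⌊c + t⌋ := by
  rw [abs_sub_le_iff] at h
  exact mem_Icc.2 ⟨Int.ceil_le.2 (by linarith), Int.le_floor.2 (by linarith)⟩

lemma Int.card_Icc_ceil_floor_le {c t : ℝ} (ht : 0 ≤ t) :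
    ((Icc ⌈c - t⌉ ⌊c + t⌋).card : ℝ) ≤ 2 * t + 1 := by
  have hle : ⌈c - t⌉ ≤ ⌊c + t⌋ + 1 := by
    have := Int.ceil_le_floor_add_one (c - t)
    have := Int.floor_le_floor (show c - t ≤ c + t by linarith)
    omega
  have hcard : ((Icc ⌈c - t⌉ ⌊c + t⌋).card : ℝ) = ⌊c + t⌋ + 1 - ⌈c - t⌉ := by
    exact_mod_cast Int.card_Icc_of_le _ _ hle
  rw [hcard]
  linarith [Int.floor_le (c + t), Int.le_ceil (c - t)]

lemma Int.card_le_of_forall_abs_sub_le {s : Finset ℤ} {c t : ℝ} (ht : 0 ≤ t)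
    (hs : ∀ n ∈ s, |(n : ℝ) - c| ≤ t) : (s.card : ℝ) ≤ 2 * t + 1 :=
  le_trans (by exact_mod_cast card_le_card fun n hn ↦
    Int.mem_Icc_ceil_floor_of_abs_sub_le (hs n hn)) (Int.card_Icc_ceil_floor_le ht)

section Box

variable {ι : Type*} [Fintype ι] [DecidableEq ι]

lemma Int.mem_Icc_pi_ceil_floor_of_abs_sub_le {m : ι → ℤ} {c t : ι → ℝ}
    (h : ∀ i, |(m i : ℝ) - c i| ≤ t i) :
    m ∈ Icc (fun i ↦ ⌈c i - t i⌉) (fun i ↦ ⌊c i + t i⌋) :=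
  mem_Icc.2 ⟨fun i ↦ (mem_Icc.1 (Int.mem_Icc_ceil_floor_of_abs_sub_le (h i))).1,
    fun i ↦ (mem_Icc.1 (Int.mem_Icc_ceil_floor_of_abs_sub_le (h i))).2⟩

lemma Int.card_pi_le_prod_of_forall_abs_sub_le {s : Finset (ι → ℤ)} {c t : ι → ℝ}
    (ht : ∀ i, 0 ≤ t i) (hs : ∀ m ∈ s, ∀ i, |(m i : ℝ) - c i| ≤ t i) :
    (s.card : ℝ) ≤ ∏ i, (2 * t i + 1) := by
  calc (s.card : ℝ) ≤ (Icc (fun i ↦ ⌈c i - t i⌉) (fun i ↦ ⌊c i + t i⌋)).card := by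
        exact_mod_cast card_le_card fun m hm ↦ Int.mem_Icc_pi_ceil_floor_of_abs_sub_le (hs m hm)
    _ = ∏ i, ((Icc ⌈c i - t i⌉ ⌊c i + t i⌋).card : ℝ) := by
        rw [Pi.card_Icc]; push_cast; rfl
    _ ≤ ∏ i, (2 * t i + 1) :=
        prod_le_prod (fun _ _ ↦ by positivity) fun i _ ↦ Int.card_Icc_ceil_floor_le (ht i)

lemma Int.finite_pi_of_forall_abs_sub_le {S : Set (ι → ℤ)} (c t : ι → ℝ)
    (hS : ∀ m ∈ S, ∀ i, |(m i : ℝ) - c i| ≤ t i) : S.Finite :=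
  (Icc (fun i ↦ ⌈c i - t i⌉) (fun i ↦ ⌊c i + t i⌋)).finite_toSet.subset fun m hm ↦
    Int.mem_Icc_pi_ceil_floor_of_abs_sub_le (hS m hm)

lemma Int.card_fiber_update_le {s : Finset (ι → ℤ)} (j : ι) (g : (ι → ℤ) → ℝ) {τ : ℝ}
    (hτ : 0 ≤ τ) (hs : ∀ m ∈ s, |(m j : ℝ) - g (update m j 0)| ≤ τ) (r : ι → ℤ) :
    ((s.filter (update · j 0 = r)).card : ℝ) ≤ 2 * τ + 1 := by
  set F := s.filter (update · j 0 = r)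
  have hinj : Set.InjOn (· j) (F : Set (ι → ℤ)) := by
    intro m hm m' hm' h
    simp only [coe_filter, Set.mem_ofPred_eq, F] at hm hm' h
    rw [← update_eq_self j m, ← update_eq_self j m', ← update_idem (0 : ℤ) (m j) m,
      ← update_idem (0 : ℤ) (m' j) m', hm.2, hm'.2, h]
  rw [← card_image_of_injOn hinj]
  refine Int.card_le_of_forall_abs_sub_le (c := g r) hτ fun n hn ↦ ?_
  obtain ⟨m, hm, rfl⟩ := mem_image.1 hn
  obtain ⟨hms, rfl⟩ := mem_filter.1 hm
  exact hs m hms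

lemma Int.card_pi_le_of_box_of_slab {s : Finset (ι → ℤ)} (j : ι) {c t : ι → ℝ} (ht : ∀ i, 0 ≤ t i)
    (hbox : ∀ m ∈ s, ∀ i, |(m i : ℝ) - c i| ≤ t i) (g : (ι → ℤ) → ℝ) {τ : ℝ} (hτ : 0 ≤ τ)
    (hslab : ∀ m ∈ s, |(m j : ℝ) - g (update m j 0)| ≤ τ) :
    (s.card : ℝ) ≤ (2 * τ + 1) * ∏ i ∈ univ.erase j, (2 * t i + 1) := by
  have himage : ((s.image (update · j 0)).card : ℝ) ≤ ∏ i ∈ univ.erase j, (2 * t i + 1) := by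
    have hbox' : ∀ r ∈ s.image (update · j 0), ∀ i,
        |(r i : ℝ) - update c j 0 i| ≤ update t j 0 i := by
      simp only [mem_image, forall_exists_index, and_imp]
      rintro _ m hm rfl i
      rcases eq_or_ne i j with rfl | hij
      · simp
      · simpa [update_of_ne hij] using hbox m hm i
    have ht' : ∀ i, 0 ≤ update t j 0 i := fun i ↦ by
      rcases eq_or_ne i j with rfl | hij
      · simp
      · simpa [update_of_ne hij] using ht i
    refine (Int.card_pi_le_prod_of_forall_abs_sub_le ht' hbox').trans_eq ?_
    rw [← mul_prod_erase univ _ (mem_univ j), update_self, mul_zero, zero_add, one_mul]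
    exact prod_congr rfl fun i hi ↦ by rw [update_of_ne (ne_of_mem_erase hi)]
  calc (s.card : ℝ)
      = ∑ r ∈ s.image (update · j 0), ((s.filter (update · j 0 = r)).card : ℝ) := by
        exact_mod_cast card_eq_sum_card_image _ s
    _ ≤ ∑ _r ∈ s.image (update · j 0), (2 * τ + 1) :=
        sum_le_sum fun r _ ↦ Int.card_fiber_update_le j g hτ hslab r
    _ = (2 * τ + 1) * (s.image (update · j 0)).card := by rw [sum_const, nsmul_eq_mul, mul_comm]
    _ ≤ (2 * τ + 1) * ∏ i ∈ univ.erase j, (2 * t i + 1) :=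
        mul_le_mul_of_nonneg_left himage (by positivity)

end Box

lemma EuclideanSpace.exists_norm_le_sqrt_card_mul_abs_apply {ι : Type*} [Fintype ι]
    {x : EuclideanSpace ℝ ι} (hx : x ≠ 0) : ∃ j, ‖x‖ ≤ √(Fintype.card ι) * |x j| := by
  have : Nonempty ι := by
    by_contra h
    have : IsEmpty ι := not_nonempty_iff.1 h
    exact hx (Subsingleton.elim x 0)
  obtain ⟨j, -, hj⟩ := exists_max_image univ (fun i ↦ |x i|) univ_nonempty
  refine ⟨j, ((EuclideanSpace.basisFun ι ℝ).norm_le_card_mul_iSup_norm_inner x).trans ?_⟩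
  exact mul_le_mul_of_nonneg_left (ciSup_le fun i ↦ by simpa using hj i (mem_univ i))
    (Real.sqrt_nonneg _)

lemma EuclideanSpace.abs_apply_le_norm {ι : Type*} [Fintype ι] (x : EuclideanSpace ℝ ι) (i : ι) :
    |x i| ≤ ‖x‖ := by
  simpa using PiLp.norm_apply_le x i

section Lattice

variable {d : ℕ} {γ : Fin d → ℝ}

@[simp]
lemma latt_apply (m : Fin d → ℤ) (i : Fin d) : latt γ m i = m i / γ i := rfl

lemma abs_sub_mul_le_of_norm_latt_sub_le {m : Fin d → ℤ} {c : EuclideanSpace ℝ (Fin d)}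
    {r : ℝ} (h : ‖latt γ m - c‖ ≤ r) {i : Fin d} (hγ : 0 < γ i) :
    |(m i : ℝ) - γ i * c i| ≤ γ i * r := by
  have : (m i : ℝ) - γ i * c i = γ i * (latt γ m - c) i := by
    simp [mul_sub, mul_div_cancel₀ _ hγ.ne']
  rw [this, abs_mul, abs_of_pos hγ]
  exact mul_le_mul_of_nonneg_left
    ((EuclideanSpace.abs_apply_le_norm _ i).trans h) hγ.le

lemma inner_latt_eq_inner_latt_update_add (k : EuclideanSpace ℝ (Fin d)) (m : Fin d → ℤ)
    (j : Fin d) :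
    inner ℝ k (latt γ m) = inner ℝ k (latt γ (update m j 0)) + k j * (m j / γ j) := by
  simp only [PiLp.inner_apply, latt_apply, RCLike.inner_apply, conj_trivial]
  rw [← add_sum_erase _ _ (mem_univ j), ← add_sum_erase _ _ (mem_univ j)]
  simp only [update_self, Int.cast_zero, zero_div, zero_mul, zero_add]
  rw [add_comm]
  congr 1
  · exact sum_congr rfl fun i hi ↦ by rw [update_of_ne (ne_of_mem_erase hi)]
  · ring

lemma abs_sub_le_of_abs_add_two_inner_latt_le {k : EuclideanSpace ℝ (Fin d)} {j : Fin d}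
    (hγ : 0 < γ j) (hk : k j ≠ 0) {a M : ℝ} {m : Fin d → ℤ}
    (h : |a + 2 * inner ℝ k (latt γ m)| ≤ M) :
    |(m j : ℝ) - -(a + 2 * inner ℝ k (latt γ (update m j 0))) * γ j / (2 * k j)| ≤
      M * γ j / (2 * |k j|) := by
  rw [inner_latt_eq_inner_latt_update_add k m j] at h
  have : (m j : ℝ) - -(a + 2 * inner ℝ k (latt γ (update m j 0))) * γ j / (2 * k j) =
      (a + 2 * (inner ℝ k (latt γ (update m j 0)) + k j * (m j / γ j))) * γ j / (2 * k j) := by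
    field_simp
    ring
  rw [this, abs_div, abs_mul, abs_of_pos hγ, abs_mul, abs_two]
  gcongr

end Lattice

lemma prod_erase_mul_add_one_le {ι : Type*} [Fintype ι] [DecidableEq ι] {a : ι → ℝ}
    (ha : ∀ i, 0 ≤ a i) {N : ℝ} (hN : 1 ≤ N) (j : ι) :
    ∏ i ∈ univ.erase j, (a i * N + 1) ≤ (∏ i, (a i + 1)) * N ^ ((Fintype.card ι : ℝ) - 1) := by
  have hcard : (Fintype.card ι : ℝ) - 1 = ((univ.erase j).card : ℕ) := by
    rw [card_erase_of_mem (mem_univ j), card_univ,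
      Nat.cast_sub (Fintype.card_pos_iff.2 ⟨j⟩)]
    simp
  have hprod : 0 ≤ ∏ i ∈ univ.erase j, (a i + 1) := prod_nonneg fun i _ ↦ by linarith [ha i]
  rw [hcard, Real.rpow_natCast, ← mul_prod_erase univ _ (mem_univ j)]
  calc ∏ i ∈ univ.erase j, (a i * N + 1) ≤ ∏ i ∈ univ.erase j, ((a i + 1) * N) :=
        prod_le_prod (fun i _ ↦ by have := ha i; positivity) fun i _ ↦ by nlinarith [ha i]
    _ = (∏ i ∈ univ.erase j, (a i + 1)) * N ^ (univ.erase j).card := by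
        rw [prod_mul_distrib, prod_const]
    _ ≤ ((a j + 1) * ∏ i ∈ univ.erase j, (a i + 1)) * N ^ (univ.erase j).card := by
        gcongr
        exact le_mul_of_one_le_left hprod (by linarith [ha j])

lemma two_mul_div_add_one_le {x y s c G M : ℝ} (hx : 0 < x) (hxy : x ≤ s * y) (hs : 0 ≤ s)
    (hc : 0 ≤ c) (hcG : c ≤ G) (hM : 0 ≤ M) :
    2 * (M * c / (2 * y)) + 1 ≤ (s * G + 1) * (M / x + 1) := by
  have hy : 0 < y := pos_of_mul_pos_right (hx.trans_le hxy) hs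
  have hMy : M / y ≤ s * (M / x) :=
    calc M / y = M * x / (x * y) := by field_simp
      _ ≤ M * (s * y) / (x * y) := by gcongr
      _ = s * (M / x) := by field_simp
  have : 2 * (M * c / (2 * y)) = c * (M / y) := by field_simp
  rw [this]
  have hMx : 0 ≤ M / x := by positivity
  nlinarith [mul_le_mul hcG hMy (by positivity) (hc.trans hcG), mul_nonneg hs (hc.trans hcG)]

lemma norm_sub_ite_le_min {E : Type*} [SeminormedAddCommGroup E] {x k : E} {r₁ r₂ : ℝ}
    (h₁ : ‖x‖ ≤ r₁) (h₂ : ‖x - k‖ ≤ r₂) : ‖x - if r₁ ≤ r₂ then 0 else k‖ ≤ min r₁ r₂ := by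
  split_ifs with h
  · simpa [min_eq_left h] using h₁
  · simpa [min_eq_right (not_le.1 h).le] using h₂

theorem lattice_count_key_step_general
    (d : ℕ) (γ : Fin d → ℝ) (hγ : ∀ j, 0 < γ j) :
    ∃ C : ℝ, 0 < C ∧
      ∀ N₁ N₂ : ℝ, 1 ≤ N₁ → 1 ≤ N₂ →
      ∀ k₀ : EuclideanSpace ℝ (Fin d), 1 ≤ ‖k₀‖ →
      ∀ a M : ℝ, 0 < M →
        {m : Fin d → ℤ | ‖latt γ m‖ ≤ 2 * N₁ ∧ ‖latt γ m - k₀‖ ≤ 2 * N₂ ∧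
            |a + 2 * (inner ℝ k₀ (latt γ m) : ℝ)| ≤ M}.Finite ∧
        (({m : Fin d → ℤ | ‖latt γ m‖ ≤ 2 * N₁ ∧ ‖latt γ m - k₀‖ ≤ 2 * N₂ ∧
            |a + 2 * (inner ℝ k₀ (latt γ m) : ℝ)| ≤ M}.ncard : ℝ) ≤
          C * (M / ‖k₀‖ + 1) * (min N₁ N₂) ^ ((d : ℝ) - 1)) := by
  classical
  have hγ₀ : ∀ i, 0 ≤ γ i := fun i ↦ (hγ i).le
  refine ⟨(√d * ∑ i, γ i + 1) * ∏ i, (4 * γ i + 1), mul_pos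
    (by have := sum_nonneg fun i (_ : i ∈ univ) ↦ hγ₀ i; positivity)
    (prod_pos fun i _ ↦ by linarith [hγ i]), ?_⟩
  intro N₁ N₂ hN₁ hN₂ k₀ hk₀ a M hM
  set S := {m : Fin d → ℤ | ‖latt γ m‖ ≤ 2 * N₁ ∧ ‖latt γ m - k₀‖ ≤ 2 * N₂ ∧
    |a + 2 * (inner ℝ k₀ (latt γ m) : ℝ)| ≤ M}
  set N := min N₁ N₂
  set c : EuclideanSpace ℝ (Fin d) := if 2 * N₁ ≤ 2 * N₂ then 0 else k₀
  have hbox : ∀ m ∈ S, ∀ i, |(m i : ℝ) - γ i * c i| ≤ 2 * γ i * N := fun m hm i ↦ by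
    have := norm_sub_ite_le_min hm.1 hm.2.1
    rw [← mul_min_of_nonneg _ _ zero_le_two] at this
    linarith [abs_sub_mul_le_of_norm_latt_sub_le this (hγ i)]
  have hfin : S.Finite := Int.finite_pi_of_forall_abs_sub_le _ _ hbox
  refine ⟨hfin, ?_⟩
  obtain ⟨j, hk₀j⟩ :=
    EuclideanSpace.exists_norm_le_sqrt_card_mul_abs_apply (norm_pos_iff.1 (by linarith : 0 < ‖k₀‖))
  simp only [Fintype.card_fin] at hk₀j
  have hkj : k₀ j ≠ 0 := fun h ↦ by simp only [h, abs_zero, mul_zero] at hk₀j; linarith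
  have hcount := Int.card_pi_le_of_box_of_slab (s := hfin.toFinset) j (c := fun i ↦ γ i * c i)
    (t := fun i ↦ 2 * γ i * N) (τ := M * γ j / (2 * |k₀ j|))
    (fun i ↦ by have := hγ₀ i; positivity) (by simpa using hbox)
    (fun r ↦ -(a + 2 * inner ℝ k₀ (latt γ r)) * γ j / (2 * k₀ j)) (by have := hγ₀ j; positivity)
    fun m hm ↦ abs_sub_le_of_abs_add_two_inner_latt_le (hγ j) hkj
      (hfin.mem_toFinset.1 hm).2.2
  have hτ := two_mul_div_add_one_le (by linarith) hk₀j (Real.sqrt_nonneg d) (hγ₀ j)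
    (single_le_sum (fun i _ ↦ hγ₀ i) (mem_univ j)) hM.le
  have hprod : ∏ i ∈ univ.erase j, (2 * (2 * γ i * N) + 1) ≤
      (∏ i, (4 * γ i + 1)) * N ^ ((d : ℝ) - 1) := by
    have := prod_erase_mul_add_one_le (a := fun i ↦ 4 * γ i) (fun i ↦ by linarith [hγ i])
      (le_min hN₁ hN₂) j
    rw [Fintype.card_fin] at this
    exact (prod_congr rfl fun i _ ↦ by ring).trans_le this
  have hN : 0 ≤ N := by positivity
  rw [Set.ncard_eq_toFinset_card S hfin]
  calc _ ≤ _ := hcount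
    _ ≤ ((√d * ∑ i, γ i + 1) * (M / ‖k₀‖ + 1)) * ((∏ i, (4 * γ i + 1)) * N ^ ((d : ℝ) - 1)) :=
        mul_le_mul hτ hprod (prod_nonneg fun i _ ↦ by have := hγ₀ i; positivity)
          (hτ.trans' (by have := hγ₀ j; positivity))
    _ = _ := by ring

/-- Lattice-point counting bound: the key step in the proof of the bilinear
Strichartz estimate, Lemma 2.2 (i). -/
theorem lattice_count_key_step
    (d : ℕ) (hd : 2 ≤ d) (γ : Fin d → ℝ) (hγ : ∀ j, 0 < γ j) :
    ∃ C : ℝ, 0 < C ∧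
      ∀ N₁ N₂ : ℝ, 1 ≤ N₁ → 1 ≤ N₂ →
      ∀ k₀ : EuclideanSpace ℝ (Fin d), 1 ≤ ‖k₀‖ →
      ∀ a M : ℝ, 0 < M →
        {m : Fin d → ℤ | ‖latt γ m‖ ≤ 2 * N₁ ∧ ‖latt γ m - k₀‖ ≤ 2 * N₂ ∧
            |a + 2 * (inner ℝ k₀ (latt γ m) : ℝ)| ≤ M}.Finite ∧
        (({m : Fin d → ℤ | ‖latt γ m‖ ≤ 2 * N₁ ∧ ‖latt γ m - k₀‖ ≤ 2 * N₂ ∧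
            |a + 2 * (inner ℝ k₀ (latt γ m) : ℝ)| ≤ M}.ncard : ℝ) ≤
          C * (M / ‖k₀‖ + 1) * (min N₁ N₂) ^ ((d : ℝ) - 1)) :=
  lattice_count_key_step_general d γ hγ
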